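/- Let (Q,S) be a QP with S of the form W = Σ_{k=1}^N a_k b_k + Σ_{k=1}^N (a_k u_k + b_k v_k) + W' where a₁,b₁,…,a_N,b_N are 2N distinct arrows with each a_k b_k a 2-cycle, u_k, v_k ∈ 𝔪^ℓ for some ℓ ≥ 2, and W' ∈ 𝔪³ involves none of the arrows a_k, b_k. Define the algebra automorphism f of ℂ⟨⟨Q⟩⟩ by f(a_k) = a_k − v_k, f(b_k) = b_k − u_k and f(c) = c for all other arrows c. Then f(W) is cyclically equivalent to a potential of the same form but with the new correction terms u'_k, v'_k lying in 𝔪^{ℓ'} for some ℓ' > ℓ. -/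

import Mathlib

open scoped Classical

/-- A quiver on vertex set `V`: a set of arrows with tail (`src`) and head (`tgt`) maps. -/
structure Quiv (V : Type) where
  A : Type
  src : A → V
  tgt : A → V

namespace Quiv

variable {V : Type} (Q : Quiv V)

/-- `Comp a b` means the arrow `a` can be composed after `b` (t(a) = h(b)). -/
def Comp (a b : Q.A) : Prop := Q.src a = Q.tgt b

/-- Positive-length paths: nonempty lists `[α₁, …, α_ℓ]` of composable arrows
(function-composition order: `t(α_j) = h(α_{j+1})`). -/
abbrev PathsPos := {l : List Q.A // l ≠ [] ∧ l.Chain' Q.Comp}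

/-- Paths: either a lazy path `e_i` at a vertex `i`, or a positive-length path. -/
abbrev Pth := V ⊕ Q.PathsPos

namespace Pth

variable {Q}

/-- The length of a path. -/
def length : Q.Pth → ℕ := Sum.elim (fun _ => 0) (fun l => l.1.length)

/-- The tail `t(p)` (starting vertex) of a path. -/
def src : Q.Pth → V := Sum.elim id (fun l => Q.src (l.1.getLast l.2.1))

/-- The head `h(p)` (ending vertex) of a path. -/
def tgt : Q.Pth → V := Sum.elim id (fun l => Q.tgt (l.1.head l.2.1))

end Pth

/-- The underlying vector space of the complete path algebra ℂ⟨⟨Q⟩⟩: all possibly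
infinite ℂ-linear combinations of paths, encoded as coefficient functions. -/
abbrev CPA := Q.Pth → ℂ

/-- The coefficient of a list of arrows, viewed as a path (with `x` as fallback vertex
for the empty list). -/
noncomputable def coefAt (u : Q.CPA) (x : V) (l : List Q.A) : ℂ :=
  if h : l = [] then u (Sum.inl x)
  else if hc : l.Chain' Q.Comp then u (Sum.inr ⟨l, h, hc⟩) else 0

/-- The multiplication of the (complete) path algebra, induced by concatenation of
paths: the coefficient of a path `p` in `conv u v` is the (finite) sum over all
splittings `p = p₁ p₂` of `u(p₁) * v(p₂)`. -/
noncomputable def conv (u v : Q.CPA) : Q.CPA := fun p =>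
  match p with
  | Sum.inl x => u (Sum.inl x) * v (Sum.inl x)
  | Sum.inr l => ∑ n ∈ Finset.range (l.1.length + 1),
      coefAt Q u (Q.tgt (l.1.head l.2.1)) (l.1.take n) *
      coefAt Q v (Q.src (l.1.getLast l.2.1)) (l.1.drop n)

/-- The identity element `∑ i e_i` of the path algebra. -/
noncomputable def one : Q.CPA := Sum.elim (fun _ => 1) (fun _ => 0)

/-- The idempotent `e_i` (the length-0 path at vertex `i`). -/
noncomputable def idem (i : V) : Q.CPA := fun p => if p = Sum.inl i then 1 else 0

/-- The arrow `a`, viewed as an element of the path algebra. -/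
noncomputable def arrowδ (a : Q.A) : Q.CPA := fun p =>
  if p = Sum.inr ⟨[a], List.cons_ne_nil a [], List.isChain_singleton a⟩ then 1 else 0

/-- A path, viewed as an element of the path algebra. -/
noncomputable def pathδ (p₀ : Q.Pth) : Q.CPA := fun p => if p = p₀ then 1 else 0

/-- Elements of ℂ⟨⟨Q⟩⟩ with coefficients supported in bounded length, i.e. the
elements of the path algebra ℂ⟨Q⟩ = ⊕_{ℓ≥0} A^ℓ. -/
def Bounded (u : Q.CPA) : Prop := ∃ N : ℕ, ∀ p : Q.Pth, N ≤ p.length → u p = 0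

/-- A cycle is a positive-length path which starts and ends at the same vertex. -/
def IsCycle (p : Q.Pth) : Prop := 0 < p.length ∧ p.src = p.tgt

/-- A potential: a (possibly infinite) linear combination of cycles, no two of which
are rotations of each other. -/
def IsPotential (S : Q.CPA) : Prop :=
  (∀ p : Q.Pth, S p ≠ 0 → Q.IsCycle p) ∧
  ∀ l l' : Q.PathsPos, S (Sum.inr l) ≠ 0 → S (Sum.inr l') ≠ 0 → l.1 ~r l'.1 → l = l'

/-- The cyclic derivative with respect to the arrow `a`:
`∂_a(α₁…α_ℓ) = ∑_k δ_{a,α_k} α_{k+1}…α_ℓα₁…α_{k-1}`, extended by linearity and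
continuity.  The coefficient of a path `q` in `∂_a S` is the sum of the coefficients
in `S` of all rotations of the cycle `a·q`. -/
noncomputable def cycDer (a : Q.A) (S : Q.CPA) : Q.CPA := fun p =>
  match p with
  | Sum.inl x =>
      if Q.src a = x ∧ Q.tgt a = x then coefAt Q S x [a] else 0
  | Sum.inr l => ∑ m ∈ Finset.range (l.1.length + 1),
      coefAt Q S (Q.tgt a) ((a :: l.1).rotate m)

/-- The two-sided ideal generated by a subset of ℂ⟨⟨Q⟩⟩. -/
def idealGen (Sg : Set Q.CPA) : Set Q.CPA :=
  {x | ∃ (n : ℕ) (f g s : Fin n → Q.CPA), (∀ k, s k ∈ Sg) ∧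
    x = ∑ k, Q.conv (f k) (Q.conv (s k) (g k))}

/-- The closure of a subset of ℂ⟨⟨Q⟩⟩ in the 𝔪-adic topology. -/
def mAdicCl (T : Set Q.CPA) : Set Q.CPA :=
  {u | ∀ n : ℕ, ∃ v ∈ T, ∀ p : Q.Pth, p.length < n → u p = v p}

/-- The Jacobian ideal `J(S)`: the closure of the two-sided ideal generated by the
cyclic derivatives of `S`. -/
def jacobIdeal (S : Q.CPA) : Set Q.CPA :=
  Q.mAdicCl (Q.idealGen (Set.range fun a => Q.cycDer a S))

/-- The set of differences `c - c'` where `c` is a cycle and `c'` its rotation. -/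
def rotDiffs : Set Q.CPA :=
  {x | ∃ l l' : Q.PathsPos, Q.IsCycle (Sum.inr l) ∧ l'.1 = l.1.rotate 1 ∧
    x = Q.pathδ (Sum.inr l) - Q.pathδ (Sum.inr l')}

/-- Cyclic equivalence: `S - S'` lies in the closure of the span of the
rotation differences of cycles. -/
def CycEquiv (S S' : Q.CPA) : Prop :=
  S - S' ∈ Q.mAdicCl (Submodule.span ℂ Q.rotDiffs : Submodule ℂ Q.CPA)

end Quiv

/-!
Expanding `f(a_k b_k) = (a_k - v_k)(b_k - u_k)`, the cross terms cancel `a_k u_k` and, up to the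
commutator `b_k v_k - v_k b_k`, also `b_k v_k`. Since `f` moves a path of length `m` only by terms
of length `≥ m + ℓ - 1`, everything else lies in `𝔪^{ℓ+2}`:
`f(W) ≡ ∑ a_k b_k + ∑ (b_k v_k - v_k b_k) + W'  (mod 𝔪^{ℓ+2})`.
The commutators have zero coefficient sum over every rotation class of cycles, and `W'` vanishes
on all cycles through some `a_k` or `b_k`. So if, up to cyclic equivalence, the coefficients of
each rotation class of cycles through the arrows `a_k, b_k` are collected on one representative
starting with some `a_k` (or with some `b_k` when no `a_j` occurs), then `∑ a_k b_k` is untouched,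
the result vanishes on those classes below length `ℓ + 2`, and splitting it by the first arrow
gives the new `∑ (a_k u'_k + b_k v'_k) + W''` with `u'_k, v'_k ∈ 𝔪^{ℓ+1}`.
-/

namespace List

variable {α : Type*}

noncomputable def rotations (l : List α) : Finset (List α) := l.cyclicPermutations.toFinset

lemma mem_rotations {l m : List α} : m ∈ l.rotations ↔ m ~r l := by
  classical
  rw [rotations, mem_toFinset, mem_cyclicPermutations_iff]

lemma rotations_congr {l m : List α} (h : m ~r l) : m.rotations = l.rotations :=
  Finset.ext fun _ => by
    simp only [mem_rotations]
    exact ⟨fun h' => h'.trans h, fun h' => h'.trans h.symm⟩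

lemma sum_rotations_rotate_one {M : Type*} [AddCommMonoid M] (l : List α) (F : List α → M) :
    ∑ m ∈ l.rotations, F (m.rotate 1) = ∑ m ∈ l.rotations, F m := by
  classical
  have hinj : Function.Injective fun m : List α => m.rotate 1 := rotate_injective 1
  have himage : l.rotations.image (·.rotate 1) = l.rotations := by
    refine Finset.eq_of_subset_of_card_le (fun m hm => ?_)
      (Finset.card_image_of_injective _ hinj).ge
    obtain ⟨k, hk, rfl⟩ := Finset.mem_image.mp hm
    exact mem_rotations.mpr ((IsRotated.forall k 1).trans (mem_rotations.mp hk))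
  rw [← Finset.sum_image hinj.injOn, himage]

/-- A rotation of `l` satisfying `P`, chosen depending only on the rotation class of `l`. -/
noncomputable def normRot (P : List α → Prop) (l : List α) : List α :=
  if h : ∃ m ∈ l.rotations, P m then h.choose else l

variable {P : List α → Prop} {l m : List α}

lemma normRot_isRotated (P : List α → Prop) (l : List α) : normRot P l ~r l := by
  unfold normRot
  split_ifs with h
  · exact mem_rotations.mp h.choose_spec.1
  · exact IsRotated.refl l

lemma normRot_spec (h : ∃ m, m ~r l ∧ P m) : P (normRot P l) := by
  have h' : ∃ m ∈ l.rotations, P m := by simpa only [mem_rotations] using h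
  rw [normRot, dif_pos h']
  exact h'.choose_spec.2

lemma normRot_congr (hml : m ~r l) (h : ∃ m', m' ~r l ∧ P m') : normRot P m = normRot P l := by
  have h' : ∃ m' ∈ l.rotations, P m' := by simpa only [mem_rotations] using h
  simp only [normRot, rotations_congr hml, dif_pos h']

lemma normRot_eq_self (hl : P l) (huniq : ∀ m, m ~r l → P m → m = l) : normRot P l = l :=
  huniq _ (normRot_isRotated P l) (normRot_spec ⟨l, IsRotated.refl l, hl⟩)

/-- Preferred representatives of rotation classes: lists starting with an element of `A`, or,
when no element of `A` occurs, with an element of `B`. -/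
def PrefRot (A B : Set α) : List α → Prop
  | [] => False
  | c :: m => c ∈ A ∨ (c ∈ B ∧ ∀ x ∈ m, x ∉ A)

variable {A B : Set α}

lemma exists_prefRot {l : List α} (h : ∃ x ∈ l, x ∈ A ∪ B) : ∃ m, m ~r l ∧ PrefRot A B m := by
  by_cases hA : ∃ x ∈ l, x ∈ A
  · obtain ⟨x, hx, hxA⟩ := hA
    obtain ⟨s, t, rfl⟩ := append_of_mem hx
    exact ⟨x :: (t ++ s), isRotated_append (l := x :: t), Or.inl hxA⟩
  · obtain ⟨x, hx, hxAB⟩ := h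
    obtain ⟨s, t, rfl⟩ := append_of_mem hx
    refine ⟨x :: (t ++ s), isRotated_append (l := x :: t),
      Or.inr ⟨hxAB.resolve_left fun hxA => hA ⟨x, hx, hxA⟩, fun y hy hyA => hA ⟨y, ?_, hyA⟩⟩⟩
    simp only [mem_append, mem_cons] at hy ⊢
    tauto

lemma PrefRot.head_mem {m : List α} (h : PrefRot A B m) (hm : m ≠ []) : m.head hm ∈ A ∪ B := by
  obtain ⟨c, m, rfl⟩ := exists_cons_of_ne_nil hm
  exact h.imp id And.left

lemma normRot_prefRot_pair {a b : α} (ha : a ∈ A) (hb : b ∉ A) :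
    normRot (PrefRot A B) [a, b] = [a, b] := by
  refine normRot_eq_self (Or.inl ha) fun m hm hP => ?_
  obtain ⟨n, hn, rfl⟩ := isRotated_iff_mod.mp hm.symm
  replace hn : n ≤ 2 := hn
  interval_cases n
  · rfl
  · simp [PrefRot, hb, ha] at hP
  · exact rotate_length [a, b]

end List

namespace Quiv

variable {V : Type} {Q : Quiv V}

section Coefficients

variable (Q) in
/-- The power `𝔪ⁿ` of the arrow ideal. -/
def mPow (n : ℕ) : Submodule ℂ Q.CPA where
  carrier := {x | ∀ p : Q.Pth, p.length < n → x p = 0}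
  add_mem' hx hy p hp := by rw [Pi.add_apply, hx p hp, hy p hp, add_zero]
  zero_mem' _ _ := rfl
  smul_mem' c x hx p hp := by rw [Pi.smul_apply, hx p hp, smul_zero]

lemma mPow_anti {m n : ℕ} (h : m ≤ n) : Q.mPow n ≤ Q.mPow m :=
  fun _ hx p hp => hx p (hp.trans_le h)

variable (Q) in
noncomputable def coeff (l : List Q.A) : Q.CPA →ₗ[ℂ] ℂ where
  toFun x := if h : l ≠ [] ∧ l.IsChain Q.Comp then x (Sum.inr ⟨l, h⟩) else 0
  map_add' x y := by split_ifs <;> simp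
  map_smul' c x := by split_ifs <;> simp

lemma coeff_apply (l : List Q.A) (x : Q.CPA) :
    Q.coeff l x = if h : l ≠ [] ∧ l.IsChain Q.Comp then x (Sum.inr ⟨l, h⟩) else 0 := rfl

lemma coeff_inr (x : Q.CPA) (l : Q.PathsPos) : Q.coeff l.1 x = x (Sum.inr l) :=
  dif_pos l.2

lemma coeff_eq_zero_of_mem_mPow {n : ℕ} {x : Q.CPA} (hx : x ∈ Q.mPow n) {l : List Q.A}
    (hl : l.length < n) : Q.coeff l x = 0 := by
  rw [coeff_apply]
  split_ifs with h
  · exact hx (Sum.inr ⟨l, h⟩) hl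
  · rfl

lemma coefAt_eq_coeff (x : Q.CPA) (w : V) {l : List Q.A} (hl : l ≠ []) :
    Q.coefAt x w l = Q.coeff l x := by
  unfold coefAt
  rw [dif_neg hl]
  split
  · exact (coeff_inr x ⟨l, hl, ‹_›⟩).symm
  · rename_i hc
    rw [coeff_apply, dif_neg fun h => hc h.2]

lemma coefAt_eq_zero_of_mem_mPow {n : ℕ} {x : Q.CPA} (hx : x ∈ Q.mPow n) (w : V)
    {l : List Q.A} (hl : l.length < n) : Q.coefAt x w l = 0 := by
  rcases eq_or_ne l [] with rfl | hne
  · exact hx (Sum.inl w) hl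
  · rw [coefAt_eq_coeff x w hne, coeff_eq_zero_of_mem_mPow hx hl]

lemma coefAt_add (x y : Q.CPA) (w : V) (l : List Q.A) :
    Q.coefAt (x + y) w l = Q.coefAt x w l + Q.coefAt y w l := by
  rcases eq_or_ne l [] with rfl | hne
  · rfl
  · simp only [coefAt_eq_coeff _ w hne, map_add]

variable (Q) in
/-- The list `l` as an element of `ℂ⟨⟨Q⟩⟩`; zero if `l` is not a path. -/
noncomputable def listδ (l : List Q.A) : Q.CPA :=
  Sum.elim (fun _ => 0) (fun m => if m.1 = l then 1 else 0)

lemma pathδ_inr (l : Q.PathsPos) : Q.pathδ (Sum.inr l) = Q.listδ l.1 := by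
  funext p
  rcases p with x | m
  · exact if_neg Sum.inl_ne_inr
  · exact if_congr (Sum.inr_injective.eq_iff.trans Subtype.ext_iff) rfl rfl

lemma listδ_singleton (c : Q.A) : Q.listδ [c] = Q.arrowδ c := by
  funext p
  rcases p with x | m
  · rfl
  · simp [listδ, arrowδ, Subtype.ext_iff]

lemma listδ_mem_mPow (l : List Q.A) : Q.listδ l ∈ Q.mPow l.length := by
  rintro (x | m) hm
  · rfl
  · exact if_neg fun h => hm.ne (congrArg List.length h)

lemma coefAt_listδ (r : List Q.A) (w : V) (m : List Q.A) :
    Q.coefAt (Q.listδ r) w m = if m = r ∧ r ≠ [] ∧ r.IsChain Q.Comp then 1 else 0 := by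
  rcases eq_or_ne m [] with rfl | hm
  · exact (if_neg fun h => h.2.1 h.1.symm).symm
  · rw [coefAt_eq_coeff _ w hm, coeff_apply]
    split_ifs with hmc hmr hmr
    · exact if_pos hmr.1
    · exact if_neg fun e => hmr ⟨e, e ▸ hmc⟩
    · exact absurd (hmr.1 ▸ hmr.2) hmc
    · rfl

lemma coefAt_arrowδ (c : Q.A) (w : V) (m : List Q.A) :
    Q.coefAt (Q.arrowδ c) w m = if m = [c] then 1 else 0 := by
  rw [← listδ_singleton, coefAt_listδ]
  simp

end Coefficients

section Multiplication

lemma conv_add_left (x y z : Q.CPA) : Q.conv (x + y) z = Q.conv x z + Q.conv y z := by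
  funext p
  rcases p with i | l
  · exact add_mul _ _ _
  · simp only [conv, Pi.add_apply, coefAt_add, add_mul, Finset.sum_add_distrib]

lemma conv_add_right (x y z : Q.CPA) : Q.conv x (y + z) = Q.conv x y + Q.conv x z := by
  funext p
  rcases p with i | l
  · exact mul_add _ _ _
  · simp only [conv, Pi.add_apply, coefAt_add, mul_add, Finset.sum_add_distrib]

lemma conv_sub_left (x y z : Q.CPA) : Q.conv (x - y) z = Q.conv x z - Q.conv y z := by
  rw [eq_sub_iff_add_eq, ← conv_add_left, sub_add_cancel]

lemma conv_sub_right (x y z : Q.CPA) : Q.conv x (y - z) = Q.conv x y - Q.conv x z := by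
  rw [eq_sub_iff_add_eq, ← conv_add_right, sub_add_cancel]

lemma conv_mem_mPow {m n : ℕ} {x y : Q.CPA} (hx : x ∈ Q.mPow m) (hy : y ∈ Q.mPow n) :
    Q.conv x y ∈ Q.mPow (m + n) := by
  rintro (i | l) hp
  · rcases Nat.eq_zero_or_pos m with hm | hm
    · exact mul_eq_zero_of_right _ (hy _ (by simpa [hm] using hp))
    · exact mul_eq_zero_of_left (hx (Sum.inl i) hm) _
  · refine Finset.sum_eq_zero fun k _ => ?_
    by_cases hk : (l.1.take k).length < m
    · rw [coefAt_eq_zero_of_mem_mPow hx _ hk, zero_mul]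
    · have : (l.1.drop k).length < n := by
        change l.1.length < m + n at hp
        simp only [List.length_take, List.length_drop] at hk ⊢
        omega
      rw [coefAt_eq_zero_of_mem_mPow hy _ this, mul_zero]

lemma arrowδ_mem_mPow (c : Q.A) : Q.arrowδ c ∈ Q.mPow 1 :=
  listδ_singleton c ▸ listδ_mem_mPow [c]

lemma conv_arrowδ_left (c : Q.A) (y : Q.CPA) (l : Q.PathsPos) :
    Q.conv (Q.arrowδ c) y (Sum.inr l) =
      if l.1.head l.2.1 = c then Q.coefAt y (Q.src (l.1.getLast l.2.1)) l.1.tail else 0 := by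
  obtain ⟨L, hne, -⟩ := l
  obtain ⟨d, r, rfl⟩ := List.exists_cons_of_ne_nil hne
  change ∑ n ∈ Finset.range (r.length + 2), _ = _
  rw [Finset.sum_eq_single_of_mem 1 (by simp)]
  · simp only [coefAt_arrowδ, List.take_succ_cons, List.take_zero, List.drop_succ_cons,
      List.drop_zero, List.head_cons, List.tail_cons, List.cons.injEq, and_true,
      ite_mul, one_mul, zero_mul]
    exact if_congr Iff.rfl rfl rfl
  · intro n hn hn1
    rw [coefAt_arrowδ, if_neg, zero_mul]
    intro h
    have := congrArg List.length h
    simp only [List.length_take, List.length_cons, List.length_nil, Finset.mem_range] at this hn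
    omega

lemma conv_arrowδ_right (c : Q.A) (y : Q.CPA) (l : Q.PathsPos) :
    Q.conv y (Q.arrowδ c) (Sum.inr l) =
      if l.1.getLast l.2.1 = c then Q.coefAt y (Q.tgt (l.1.head l.2.1)) l.1.dropLast
      else 0 := by
  obtain ⟨L, hne, -⟩ := l
  obtain ⟨r, d, rfl⟩ := List.eq_nil_or_concat' L |>.resolve_left hne
  change ∑ n ∈ Finset.range ((r ++ [d]).length + 1), _ = _
  rw [Finset.sum_eq_single_of_mem r.length (by simp)]
  · simp only [coefAt_arrowδ, List.drop_left, List.take_left, List.getLast_append_singleton,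
      List.dropLast_concat, mul_ite, mul_one, mul_zero, List.cons.injEq, and_true]
  · intro n hn hn1
    rw [coefAt_arrowδ, if_neg, mul_zero]
    intro h
    have := congrArg List.length h
    simp only [List.length_drop, List.length_append, List.length_cons, List.length_nil,
      Finset.mem_range] at this hn
    omega

lemma listδ_cons (c : Q.A) {r : List Q.A} (hr : r ≠ []) :
    Q.listδ (c :: r) = Q.conv (Q.arrowδ c) (Q.listδ r) := by
  funext p
  rcases p with i | ⟨L, hne, hch⟩
  · exact (zero_mul _).symm
  · obtain ⟨d, m, rfl⟩ := List.exists_cons_of_ne_nil hne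
    have hmc : m.IsChain Q.Comp := hch.tail
    rw [conv_arrowδ_left, coefAt_listδ]
    by_cases hdc : d = c <;> by_cases hmr : m = r <;> simp_all [listδ]

lemma coefAt_idem (i w : V) (m : List Q.A) :
    Q.coefAt (Q.idem i) w m = if m = [] ∧ w = i then 1 else 0 := by
  rcases eq_or_ne m [] with rfl | hm
  · simp [coefAt, idem]
  · rw [coefAt_eq_coeff _ w hm, coeff_apply, if_neg fun h => hm h.1]
    split_ifs <;> simp [idem]

lemma conv_idem_left (i : V) (y : Q.CPA) (l : Q.PathsPos) :
    Q.conv (Q.idem i) y (Sum.inr l) =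
      if Q.tgt (l.1.head l.2.1) = i then y (Sum.inr l) else 0 := by
  change ∑ n ∈ Finset.range (l.1.length + 1), _ = _
  rw [Finset.sum_eq_single_of_mem 0 (by simp)]
  · simp only [coefAt_idem, List.take_zero, List.drop_zero, true_and, ite_mul, one_mul,
      zero_mul, coefAt_eq_coeff _ _ l.2.1, coeff_inr]
  · intro n hn hn0
    have : l.1.take n ≠ [] := by simpa [l.2.1] using hn0
    rw [coefAt_idem, if_neg fun h => this h.1, zero_mul]

lemma conv_idem_right (i : V) (y : Q.CPA) (l : Q.PathsPos) :
    Q.conv y (Q.idem i) (Sum.inr l) =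
      if Q.src (l.1.getLast l.2.1) = i then y (Sum.inr l) else 0 := by
  change ∑ n ∈ Finset.range (l.1.length + 1), _ = _
  rw [Finset.sum_eq_single_of_mem l.1.length (by simp)]
  · simp only [coefAt_idem, List.drop_length, List.take_length, true_and, mul_ite, mul_one,
      mul_zero, coefAt_eq_coeff _ _ l.2.1, coeff_inr]
  · intro n hn hn0
    have : l.1.drop n ≠ [] := by
      simp only [Finset.mem_range] at hn
      simpa using Nat.lt_of_le_of_ne (Nat.le_of_lt_succ hn) hn0
    rw [coefAt_idem, if_neg fun h => this h.1, mul_zero]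

end Multiplication

section Endomorphisms

variable (Q) in
structure IsContEndo (f : Q.CPA → Q.CPA) : Prop where
  map_add : ∀ x y : Q.CPA, f (x + y) = f x + f y
  map_smul : ∀ (c : ℂ) (x : Q.CPA), f (c • x) = c • f x
  map_conv : ∀ x y : Q.CPA, f (Q.conv x y) = Q.conv (f x) (f y)
  map_idem : ∀ i : V, f (Q.idem i) = Q.idem i
  cont : ∀ n : ℕ, ∃ m : ℕ, ∀ x y : Q.CPA, (∀ p : Q.Pth, p.length < m → x p = y p) →
    ∀ p : Q.Pth, p.length < n → f x p = f y p

variable (Q) in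
noncomputable def trunc [Finite Q.A] (n : ℕ) (x : Q.CPA) : Q.CPA :=
  ∑ m ∈ (List.finite_length_lt Q.A n).toFinset, Q.coeff m x • Q.listδ m

lemma trunc_apply [Finite Q.A] {n : ℕ} {x : Q.CPA} (hx : x ∈ Q.mPow 1) {p : Q.Pth}
    (hp : p.length < n) : Q.trunc n x p = x p := by
  rw [trunc, Finset.sum_apply]
  rcases p with i | l
  · simp only [Pi.smul_apply, listδ, Sum.elim_inl, smul_zero, Finset.sum_const_zero]
    exact (hx (Sum.inl i) zero_lt_one).symm
  · rw [Finset.sum_eq_single l.1]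
    · simp [coeff_inr, listδ]
    · intro m _ hm
      simp [listδ, Ne.symm hm]
    · exact fun h => absurd (by simpa using (show l.1.length < n from hp)) h

namespace IsContEndo

variable {f : Q.CPA → Q.CPA} (hf : Q.IsContEndo f)
include hf

def toLinearMap : Q.CPA →ₗ[ℂ] Q.CPA where
  toFun := f
  map_add' := hf.map_add
  map_smul' := hf.map_smul

lemma map_sum {ι : Type*} (s : Finset ι) (F : ι → Q.CPA) :
    f (∑ i ∈ s, F i) = ∑ i ∈ s, f (F i) := _root_.map_sum hf.toLinearMap F s

variable {ℓ : ℕ} (hnear : ∀ c : Q.A, f (Q.arrowδ c) - Q.arrowδ c ∈ Q.mPow ℓ) (hℓ : 1 ≤ ℓ)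
include hnear hℓ

lemma listδ_sub_mem_mPow {l : List Q.A} (hl : l ≠ []) :
    f (Q.listδ l) - Q.listδ l ∈ Q.mPow (l.length + ℓ - 1) := by
  induction l with
  | nil => exact absurd rfl hl
  | cons c r ih =>
    rcases eq_or_ne r [] with rfl | hr
    · simpa [listδ_singleton] using hnear c
    · have hexpand : f (Q.listδ (c :: r)) - Q.listδ (c :: r) =
          Q.conv (Q.arrowδ c) (f (Q.listδ r) - Q.listδ r)
            + Q.conv (f (Q.arrowδ c) - Q.arrowδ c) (Q.listδ r)
            + Q.conv (f (Q.arrowδ c) - Q.arrowδ c) (f (Q.listδ r) - Q.listδ r) := by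
        simp only [listδ_cons c hr, hf.map_conv, conv_sub_left, conv_sub_right]
        abel
      have h1 := conv_mem_mPow (arrowδ_mem_mPow c) (ih hr)
      have h2 := conv_mem_mPow (hnear c) (listδ_mem_mPow r)
      have h3 := conv_mem_mPow (hnear c) (ih hr)
      rw [hexpand]
      refine add_mem (add_mem (mPow_anti ?_ h1) (mPow_anti ?_ h2)) (mPow_anti ?_ h3) <;>
        simp only [List.length_cons] <;> omega

lemma sub_mem_mPow [Finite Q.A] {m : ℕ} (hm : 1 ≤ m) {x : Q.CPA} (hx : x ∈ Q.mPow m) :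
    f x - x ∈ Q.mPow (m + ℓ - 1) := by
  -- by continuity, `f x` agrees at `p` with `f` of a truncation of `x`, which is a finite
  -- combination of paths of length `≥ m`
  intro p hp
  obtain ⟨m₀, hm₀⟩ := hf.cont (p.length + 1)
  set n := max m₀ (p.length + 1)
  have hx1 : x ∈ Q.mPow 1 := mPow_anti hm hx
  have htrunc : f (Q.trunc n x) - Q.trunc n x =
      ∑ q ∈ (List.finite_length_lt Q.A n).toFinset,
        Q.coeff q x • (f (Q.listδ q) - Q.listδ q) := by
    simp only [trunc, hf.map_sum, hf.map_smul, smul_sub, Finset.sum_sub_distrib]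
  have hmem : f (Q.trunc n x) - Q.trunc n x ∈ Q.mPow (m + ℓ - 1) := by
    rw [htrunc]
    refine Submodule.sum_mem _ fun q _ => ?_
    by_cases hq : Q.coeff q x = 0
    · rw [hq, zero_smul]
      exact zero_mem _
    · have hlen : m ≤ q.length := not_lt.mp fun h => hq (coeff_eq_zero_of_mem_mPow hx h)
      refine Submodule.smul_mem _ _ (mPow_anti (by omega) (hf.listδ_sub_mem_mPow hnear hℓ ?_))
      rintro rfl
      simp at hlen
      omega
  have hf_eq : f x p = f (Q.trunc n x) p :=
    hm₀ _ _ (fun q hq => (trunc_apply hx1 (by omega)).symm) p (by omega)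
  rw [Pi.sub_apply, hf_eq, ← trunc_apply hx1 (show p.length < n by omega)]
  exact hmem p hp

lemma mem_mPow [Finite Q.A] {m : ℕ} (hm : 1 ≤ m) {x : Q.CPA} (hx : x ∈ Q.mPow m) :
    f x ∈ Q.mPow m := by
  rw [← sub_add_cancel (f x) x]
  exact add_mem (mPow_anti (by omega) (hf.sub_mem_mPow hnear hℓ hm hx)) hx

end IsContEndo

end Endomorphisms

section Cycles

variable (Q) in
def IsCyclicPath (l : List Q.A) : Prop := l ≠ [] ∧ Cycle.Chain Q.Comp (l : Cycle Q.A)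

lemma IsCyclicPath.isChain {l : List Q.A} (h : Q.IsCyclicPath l) : l.IsChain Q.Comp :=
  ((Cycle.chain_ne_nil Q.Comp h.1).mp h.2).tail

lemma IsCyclicPath.of_isRotated {l m : List Q.A} (h : Q.IsCyclicPath l) (hml : m ~r l) :
    Q.IsCyclicPath m :=
  ⟨fun hm => h.1 (List.isRotated_nil_iff'.mp (hm ▸ hml)).symm, Cycle.coe_eq_coe.mpr hml ▸ h.2⟩

lemma isCycle_inr_iff (l : Q.PathsPos) : Q.IsCycle (Sum.inr l) ↔ Q.IsCyclicPath l.1 := by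
  obtain ⟨L, hne, hch⟩ := l
  obtain ⟨d, r, rfl⟩ := List.exists_cons_of_ne_nil hne
  simp only [IsCycle, IsCyclicPath, Cycle.chain_ne_nil Q.Comp hne, List.isChain_cons_cons,
    Pth.length, Pth.src, Pth.tgt, Sum.elim_inr, List.length_cons, Nat.zero_lt_succ, true_and,
    ne_eq, hne, not_false_eq_true, List.head_cons, Comp]
  exact ⟨fun h => ⟨h, hch⟩, fun h => h.1⟩

variable (Q) in
def SupportedOnCycles (x : Q.CPA) : Prop :=
  ∀ l : Q.PathsPos, x (Sum.inr l) ≠ 0 → Q.IsCycle (Sum.inr l)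

lemma SupportedOnCycles.isCyclicPath {x : Q.CPA} (hx : Q.SupportedOnCycles x) {m : List Q.A}
    (hm : Q.coeff m x ≠ 0) : Q.IsCyclicPath m := by
  rw [coeff_apply] at hm
  split_ifs at hm with h
  · exact (isCycle_inr_iff ⟨m, h⟩).mp (hx _ hm)
  · exact absurd rfl hm

lemma SupportedOnCycles.sub {x y : Q.CPA} (hx : Q.SupportedOnCycles x)
    (hy : Q.SupportedOnCycles y) : Q.SupportedOnCycles (x - y) := fun l hl => by
  by_cases hxl : x (Sum.inr l) = 0
  · exact hy l fun hyl => hl (by rw [Pi.sub_apply, hxl, hyl, sub_zero])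
  · exact hx l hxl

lemma sum_idem_conv_apply_inl [Fintype V] (x : Q.CPA) (w : V) :
    (∑ i, Q.conv (Q.idem i) (Q.conv x (Q.idem i))) (Sum.inl w) = x (Sum.inl w) := by
  simp [Finset.sum_apply, conv, idem]

lemma sum_idem_conv_apply_inr [Fintype V] (x : Q.CPA) (l : Q.PathsPos) :
    (∑ i, Q.conv (Q.idem i) (Q.conv x (Q.idem i))) (Sum.inr l) =
      if Q.src (l.1.getLast l.2.1) = Q.tgt (l.1.head l.2.1) then x (Sum.inr l) else 0 := by
  simp [Finset.sum_apply, conv_idem_left, conv_idem_right]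

lemma IsContEndo.supportedOnCycles [Fintype V] {f : Q.CPA → Q.CPA} (hf : Q.IsContEndo f)
    {x : Q.CPA} (hx : Q.SupportedOnCycles x) : Q.SupportedOnCycles (f x) := by
  have hx_eq : x = ∑ i, Q.conv (Q.idem i) (Q.conv x (Q.idem i)) := by
    funext p
    rcases p with w | l
    · rw [sum_idem_conv_apply_inl]
    · rw [sum_idem_conv_apply_inr]
      split_ifs with h
      · rfl
      · by_contra hne
        exact h (hx l hne).2
  have hfx_eq : f x = ∑ i, Q.conv (Q.idem i) (Q.conv (f x) (Q.idem i)) := by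
    conv_lhs => rw [hx_eq]
    simp only [hf.map_sum, hf.map_conv, hf.map_idem]
  intro l hl
  rw [hfx_eq, sum_idem_conv_apply_inr] at hl
  split_ifs at hl with h
  · exact ⟨List.length_pos_iff.mpr l.2.1, h⟩
  · exact absurd rfl hl

lemma listδ_sub_mem_span {l m : List Q.A} (hl : Q.IsCyclicPath l) (hml : m ~r l) :
    Q.listδ l - Q.listδ m ∈ Submodule.span ℂ Q.rotDiffs := by
  obtain ⟨n, rfl⟩ := hml.symm
  induction n with
  | zero => simp
  | succ n ih =>
    have hn : Q.IsCyclicPath (l.rotate n) := hl.of_isRotated (List.IsRotated.forall l n)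
    have hn1 : Q.IsCyclicPath (l.rotate (n + 1)) := hl.of_isRotated (List.IsRotated.forall l _)
    rw [← sub_add_sub_cancel _ (Q.listδ (l.rotate n))]
    refine add_mem (ih (List.IsRotated.forall l n)) (Submodule.subset_span ?_)
    refine ⟨⟨_, hn.1, hn.isChain⟩, ⟨_, hn1.1, hn1.isChain⟩,
      (isCycle_inr_iff _).mpr hn, (List.rotate_rotate l n 1).symm, ?_⟩
    rw [pathδ_inr, pathδ_inr]

variable (Q) in
/-- Moves the coefficient of every path `m` onto the path `σ m`. -/
noncomputable def rotPush (σ : List Q.A → List Q.A) (g : Q.CPA) : Q.CPA :=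
  Sum.elim (fun x => g (Sum.inl x)) fun l => ∑ m ∈ l.1.rotations with σ m = l.1, Q.coeff m g

variable {σ : List Q.A → List Q.A}

lemma rotPush_add (x y : Q.CPA) : Q.rotPush σ (x + y) = Q.rotPush σ x + Q.rotPush σ y := by
  funext p
  rcases p with i | l
  · rfl
  · simp only [rotPush, Sum.elim_inr, Pi.add_apply, map_add, Finset.sum_add_distrib]

lemma rotPush_mem_mPow {n : ℕ} {x : Q.CPA} (hx : x ∈ Q.mPow n) : Q.rotPush σ x ∈ Q.mPow n := by
  rintro (i | l) hl
  · exact hx _ hl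
  · change ∑ m ∈ l.1.rotations with σ m = l.1, Q.coeff m x = 0
    refine Finset.sum_eq_zero fun m hm => coeff_eq_zero_of_mem_mPow hx ?_
    rw [(List.mem_rotations.mp (Finset.mem_filter.mp hm).1).perm.length_eq]
    exact hl

lemma rotPush_apply_eq_zero {x : Q.CPA} {l : Q.PathsPos}
    (h : ∀ m, m ~r l.1 → σ m = l.1 → Q.coeff m x = 0) : Q.rotPush σ x (Sum.inr l) = 0 :=
  Finset.sum_eq_zero fun m hm =>
    h m (List.mem_rotations.mp (Finset.mem_filter.mp hm).1) (Finset.mem_filter.mp hm).2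

lemma rotPush_apply_eq_zero_of_sum {x : Q.CPA} {l : Q.PathsPos}
    (hconst : ∀ m, m ~r l.1 → σ m = σ l.1) (hsum : ∑ m ∈ l.1.rotations, Q.coeff m x = 0) :
    Q.rotPush σ x (Sum.inr l) = 0 := by
  by_cases hl : σ l.1 = l.1
  · refine (Finset.sum_congr (Finset.filter_true_of_mem fun m hm => ?_) fun _ _ => rfl).trans hsum
    rw [hconst m (List.mem_rotations.mp hm), hl]
  · exact rotPush_apply_eq_zero fun m hm hσ => absurd (hconst m hm ▸ hσ) hl

lemma rotPush_eq_self {x : Q.CPA} (h : ∀ l : Q.PathsPos, x (Sum.inr l) ≠ 0 → σ l.1 = l.1) :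
    Q.rotPush σ x = x := by
  funext p
  rcases p with i | l
  · rfl
  · change ∑ m ∈ l.1.rotations with σ m = l.1, Q.coeff m x = x (Sum.inr l)
    rw [Finset.sum_eq_single l.1, coeff_inr]
    · intro m hm hml
      by_contra hx
      rw [coeff_apply] at hx
      split_ifs at hx with hv
      · exact hml ((h ⟨m, hv⟩ hx).symm.trans (Finset.mem_filter.mp hm).2)
      · exact hx rfl
    · intro hl
      rw [coeff_inr]
      by_contra hx
      exact hl (Finset.mem_filter.mpr ⟨List.mem_rotations.mpr (List.IsRotated.refl _), h l hx⟩)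

lemma cycEquiv_rotPush [Finite Q.A] (hσ : ∀ l, σ l ~r l) {g : Q.CPA}
    (hg : Q.SupportedOnCycles g) : Q.CycEquiv g (Q.rotPush σ g) := by
  intro n
  refine ⟨∑ m ∈ (List.finite_length_lt Q.A n).toFinset,
    Q.coeff m g • (Q.listδ m - Q.listδ (σ m)), Submodule.sum_mem _ fun m _ => ?_, ?_⟩
  · by_cases hm : Q.coeff m g = 0
    · rw [hm, zero_smul]
      exact zero_mem _
    · exact Submodule.smul_mem _ _ (listδ_sub_mem_span (hg.isCyclicPath hm) (hσ m))
  · rintro (x | l) hp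
    · simp [rotPush, listδ]
    · have hlen : l.1.length < n := hp
      have hS : {m ∈ (List.finite_length_lt Q.A n).toFinset | l.1 = σ m} =
          {m ∈ l.1.rotations | σ m = l.1} := by
        ext m
        simp only [Finset.mem_filter, Set.Finite.mem_toFinset, Set.mem_ofPred_eq,
          List.mem_rotations]
        constructor
        · rintro ⟨-, h⟩
          exact ⟨h ▸ (hσ m).symm, h.symm⟩
        · rintro ⟨hm, h⟩
          exact ⟨hm.perm.length_eq ▸ hlen, h.symm⟩
      simp only [Pi.sub_apply, Finset.sum_apply, Pi.smul_apply, smul_sub, Finset.sum_sub_distrib,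
        listδ, rotPush, Sum.elim_inr, smul_eq_mul, mul_ite, mul_one, mul_zero, Finset.sum_ite_eq,
        Set.Finite.mem_toFinset, Set.mem_ofPred_eq, hlen, if_true, coeff_inr,
        ← Finset.sum_filter, hS]

lemma coeff_conv_arrowδ_eq_rotate (c : Q.A) (x : Q.CPA) {m : List Q.A}
    (hm : Q.IsCyclicPath m) :
    Q.coeff m (Q.conv (Q.arrowδ c) x) = Q.coeff (m.rotate 1) (Q.conv x (Q.arrowδ c)) := by
  have hm' : Q.IsCyclicPath (m.rotate 1) := hm.of_isRotated (List.IsRotated.forall m 1)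
  rw [show Q.coeff m _ = _ from coeff_inr _ ⟨m, hm.1, hm.isChain⟩,
    show Q.coeff (m.rotate 1) _ = _ from coeff_inr _ ⟨_, hm'.1, hm'.isChain⟩,
    conv_arrowδ_left, conv_arrowδ_right]
  obtain ⟨d, r, rfl⟩ := List.exists_cons_of_ne_nil hm.1
  simp only [List.rotate_cons_succ, List.rotate_zero, List.getLast_append_singleton,
    List.dropLast_concat, List.head_cons, List.tail_cons]
  rcases eq_or_ne r [] with rfl | hr
  · have hdd : Q.Comp d d := (Cycle.chain_singleton Q.Comp d).mp hm.2
    simp only [List.getLast_singleton, List.nil_append, List.head_cons]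
    rw [hdd]
    exact if_congr Iff.rfl rfl rfl
  · simp only [coefAt_eq_coeff x _ hr]

lemma sum_rotations_coeff_commutator (c : Q.A) (x : Q.CPA) {l : List Q.A}
    (hl : Q.IsCyclicPath l) :
    ∑ m ∈ l.rotations, Q.coeff m (Q.conv (Q.arrowδ c) x - Q.conv x (Q.arrowδ c)) = 0 := by
  simp only [map_sub, Finset.sum_sub_distrib, sub_eq_zero]
  rw [← List.sum_rotations_rotate_one l fun m => Q.coeff m (Q.conv x (Q.arrowδ c))]
  exact Finset.sum_congr rfl fun m hm =>
    coeff_conv_arrowδ_eq_rotate c x (hl.of_isRotated (List.mem_rotations.mp hm))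

lemma rotPush_normRot_prefRot_eq_zero {A B : Set Q.A} {R : Q.CPA} (hR : Q.SupportedOnCycles R)
    {n : ℕ} (hsum : ∀ l, Q.IsCyclicPath l → (∃ x ∈ l, x ∈ A ∪ B) → l.length < n →
      ∑ m ∈ l.rotations, Q.coeff m R = 0)
    {l : Q.PathsPos} (hl : ∃ x ∈ l.1, x ∈ A ∪ B)
    (hl' : l.1.head l.2.1 ∉ A ∪ B ∨ l.1.length < n) :
    Q.rotPush (List.normRot (List.PrefRot A B)) R (Sum.inr l) = 0 := by
  rcases hl' with hhead | hlen
  · refine rotPush_apply_eq_zero fun m hm hσ => absurd ?_ hhead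
    obtain ⟨x, hx, hxAB⟩ := hl
    have hP := List.normRot_spec (List.exists_prefRot ⟨x, hm.mem_iff.mpr hx, hxAB⟩)
    rw [hσ] at hP
    exact hP.head_mem l.2.1
  · by_cases hcyc : Q.IsCyclicPath l.1
    · exact rotPush_apply_eq_zero_of_sum
        (fun m hm => List.normRot_congr hm (List.exists_prefRot hl)) (hsum _ hcyc hl hlen)
    · refine rotPush_apply_eq_zero fun m hm _ => ?_
      by_contra h
      exact hcyc ((hR.isCyclicPath h).of_isRotated hm.symm)

end Cycles

section Splitting

variable (Q) in
noncomputable def leftQuot (c : Q.A) (y : Q.CPA) : Q.CPA :=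
  Sum.elim (fun _ => Q.coeff [c] y) fun l => Q.coeff (c :: l.1) y

variable (Q) in
noncomputable def avoiding (s : Set Q.A) (y : Q.CPA) : Q.CPA :=
  Sum.elim (fun x => y (Sum.inl x)) fun l => if ∀ x ∈ l.1, x ∉ s then y (Sum.inr l) else 0

lemma conv_arrowδ_leftQuot (c : Q.A) (y : Q.CPA) (l : Q.PathsPos) :
    Q.conv (Q.arrowδ c) (Q.leftQuot c y) (Sum.inr l) =
      if l.1.head l.2.1 = c then y (Sum.inr l) else 0 := by
  rw [conv_arrowδ_left]
  obtain ⟨L, hne, hch⟩ := l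
  obtain ⟨d, r, rfl⟩ := List.exists_cons_of_ne_nil hne
  split_ifs with hd
  · change d = c at hd
    subst hd
    dsimp only [List.tail_cons]
    rcases eq_or_ne r [] with rfl | hr
    · exact coeff_inr y ⟨[d], hne, hch⟩
    · rw [coefAt_eq_coeff _ _ hr, coeff_apply, dif_pos ⟨hr, hch.tail⟩]
      exact coeff_inr y ⟨d :: r, hne, hch⟩
  · rfl

lemma leftQuot_mem_mPow {c : Q.A} {y : Q.CPA} {n : ℕ}
    (hy : ∀ l : Q.PathsPos, c ∈ l.1 → l.1.length < n + 1 → y (Sum.inr l) = 0) :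
    Q.leftQuot c y ∈ Q.mPow n := by
  rintro (x | l) hl
  · change Q.coeff [c] y = 0
    rw [coeff_apply]
    split_ifs with h
    · exact hy ⟨[c], h⟩ (List.mem_singleton_self c) (Nat.succ_lt_succ hl)
    · rfl
  · change Q.coeff (c :: l.1) y = 0
    rw [coeff_apply]
    split_ifs with h
    · exact hy ⟨c :: l.1, h⟩ List.mem_cons_self (Nat.succ_lt_succ hl)
    · rfl

lemma avoiding_mem_mPow (s : Set Q.A) {y : Q.CPA} {n : ℕ} (hy : y ∈ Q.mPow n) :
    Q.avoiding s y ∈ Q.mPow n := by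
  rintro (x | l) hl
  · exact hy _ hl
  · exact ite_eq_right_iff.mpr fun _ => hy _ hl

lemma eq_sum_conv_leftQuot_add_avoiding {ι : Type*} [Fintype ι] {c : ι → Q.A}
    (hc : Function.Injective c) {y : Q.CPA}
    (hy : ∀ l : Q.PathsPos, (∃ x ∈ l.1, x ∈ Set.range c) → l.1.head l.2.1 ∉ Set.range c →
      y (Sum.inr l) = 0) :
    y = ∑ i, Q.conv (Q.arrowδ (c i)) (Q.leftQuot (c i) y) + Q.avoiding (Set.range c) y := by
  funext p
  rcases p with x | l
  · simp [avoiding, conv, arrowδ]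
  · simp only [Pi.add_apply, Finset.sum_apply, conv_arrowδ_leftQuot, avoiding, Sum.elim_inr]
    by_cases hhead : l.1.head l.2.1 ∈ Set.range c
    · obtain ⟨j, hj⟩ := hhead
      rw [Finset.sum_eq_single j (fun i _ hij => if_neg fun h => hij (hc (hj.trans h)).symm)
        (by simp), if_pos hj.symm, if_neg fun h => h _ (List.head_mem l.2.1) ⟨j, hj⟩, add_zero]
    · rw [Finset.sum_eq_zero fun i _ => if_neg fun h => hhead ⟨i, h.symm⟩, zero_add]
      split_ifs with havoid
      · rfl
      · push Not at havoid
        exact hy l havoid hhead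

end Splitting

section TwoCycles

variable {N : ℕ} {a b : Fin N → Q.A}

lemma exists_eq_pair_of_sum_ne_zero {l : Q.PathsPos}
    (h : (∑ k, Q.conv (Q.arrowδ (a k)) (Q.arrowδ (b k))) (Sum.inr l) ≠ 0) :
    ∃ k, l.1 = [a k, b k] := by
  have hpair : ∀ k, Q.conv (Q.arrowδ (a k)) (Q.arrowδ (b k)) = Q.listδ [a k, b k] := fun k => by
    rw [listδ_cons _ (List.cons_ne_nil _ _), listδ_singleton]
  simp only [hpair, Finset.sum_apply] at h
  obtain ⟨k, -, hk⟩ := Finset.exists_ne_zero_of_sum_ne_zero h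
  exact ⟨k, by_contra fun h' => hk (if_neg h')⟩

lemma supportedOnCycles_sum_pair
    (h2cycle : ∀ k, Q.src (a k) = Q.tgt (b k) ∧ Q.src (b k) = Q.tgt (a k)) :
    Q.SupportedOnCycles (∑ k, Q.conv (Q.arrowδ (a k)) (Q.arrowδ (b k))) := by
  intro l hl
  obtain ⟨k, hk⟩ := exists_eq_pair_of_sum_ne_zero hl
  obtain ⟨L, _, _⟩ := l
  subst hk
  exact ⟨Nat.two_pos, (h2cycle k).2⟩

lemma rotPush_sum_pair (hdistinct : Function.Injective (Sum.elim a b)) :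
    Q.rotPush (List.normRot (List.PrefRot (Set.range a) (Set.range b)))
      (∑ k, Q.conv (Q.arrowδ (a k)) (Q.arrowδ (b k))) =
      ∑ k, Q.conv (Q.arrowδ (a k)) (Q.arrowδ (b k)) := by
  refine rotPush_eq_self fun l hl => ?_
  obtain ⟨k, hk⟩ := exists_eq_pair_of_sum_ne_zero hl
  rw [hk]
  exact List.normRot_prefRot_pair ⟨k, rfl⟩ fun ⟨j, hj⟩ => Sum.inl_ne_inr (hdistinct hj)

lemma exists_normalForm (hdistinct : Function.Injective (Sum.elim a b)) {n : ℕ}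
    {y : Q.CPA} (hy3 : y ∈ Q.mPow 3)
    (hy : ∀ l : Q.PathsPos, (∃ x ∈ l.1, x ∈ Set.range a ∪ Set.range b) →
      (l.1.head l.2.1 ∉ Set.range a ∪ Set.range b ∨ l.1.length < n + 1) → y (Sum.inr l) = 0) :
    ∃ (u' v' : Fin N → Q.CPA) (W'' : Q.CPA),
      (∀ k, u' k ∈ Q.mPow n) ∧ (∀ k, v' k ∈ Q.mPow n) ∧ W'' ∈ Q.mPow 3 ∧
      (∀ (l : Q.PathsPos) (k : Fin N), a k ∈ l.1 ∨ b k ∈ l.1 → W'' (Sum.inr l) = 0) ∧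
      y = ∑ k, (Q.conv (Q.arrowδ (a k)) (u' k) + Q.conv (Q.arrowδ (b k)) (v' k)) + W'' := by
  have hquot : ∀ c ∈ Set.range a ∪ Set.range b, Q.leftQuot c y ∈ Q.mPow n :=
    fun c hc => leftQuot_mem_mPow fun l hcl hl => hy l ⟨c, hcl, hc⟩ (Or.inr hl)
  refine ⟨fun k => Q.leftQuot (a k) y, fun k => Q.leftQuot (b k) y,
    Q.avoiding (Set.range a ∪ Set.range b) y, fun k => hquot _ (Or.inl ⟨k, rfl⟩),
    fun k => hquot _ (Or.inr ⟨k, rfl⟩), avoiding_mem_mPow _ hy3, fun l k hk => ?_, ?_⟩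
  · refine if_neg fun h => ?_
    rcases hk with hk | hk
    · exact h _ hk (Or.inl ⟨k, rfl⟩)
    · exact h _ hk (Or.inr ⟨k, rfl⟩)
  · have := eq_sum_conv_leftQuot_add_avoiding hdistinct (y := y) fun l hl hhead =>
      hy l (Set.Sum.elim_range a b ▸ hl) (Or.inl (Set.Sum.elim_range a b ▸ hhead))
    rwa [Fintype.sum_sum_type, Set.Sum.elim_range, ← Finset.sum_add_distrib] at this

end TwoCycles

section Reduction

variable {N : ℕ} {a b : Fin N → Q.A} {u v : Fin N → Q.CPA} {f : Q.CPA → Q.CPA} {ℓ : ℕ}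

lemma map_arrowδ_sub_mem_mPow (hu : ∀ k, u k ∈ Q.mPow ℓ) (hv : ∀ k, v k ∈ Q.mPow ℓ)
    (hfa : ∀ k, f (Q.arrowδ (a k)) = Q.arrowδ (a k) - v k)
    (hfb : ∀ k, f (Q.arrowδ (b k)) = Q.arrowδ (b k) - u k)
    (hfc : ∀ c : Q.A, (∀ k, c ≠ a k ∧ c ≠ b k) → f (Q.arrowδ c) = Q.arrowδ c) (c : Q.A) :
    f (Q.arrowδ c) - Q.arrowδ c ∈ Q.mPow ℓ := by
  by_cases ha : ∃ k, c = a k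
  · obtain ⟨k, rfl⟩ := ha
    rw [hfa, sub_sub_cancel_left]
    exact neg_mem (hv k)
  by_cases hb : ∃ k, c = b k
  · obtain ⟨k, rfl⟩ := hb
    rw [hfb, sub_sub_cancel_left]
    exact neg_mem (hu k)
  push Not at ha hb
  rw [hfc c fun k => ⟨ha k, hb k⟩, sub_self]
  exact zero_mem _

variable [Finite Q.A] (hf : Q.IsContEndo f) (hℓ : 2 ≤ ℓ)
  (hnear : ∀ c : Q.A, f (Q.arrowδ c) - Q.arrowδ c ∈ Q.mPow ℓ)
include hf hℓ hnear

lemma IsContEndo.twoCycle_remainder_mem {a b : Q.A} {u v : Q.CPA} (hu : u ∈ Q.mPow ℓ)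
    (hv : v ∈ Q.mPow ℓ) (hfa : f (Q.arrowδ a) = Q.arrowδ a - v)
    (hfb : f (Q.arrowδ b) = Q.arrowδ b - u) :
    f (Q.conv (Q.arrowδ a) (Q.arrowδ b) + (Q.conv (Q.arrowδ a) u + Q.conv (Q.arrowδ b) v))
      - Q.conv (Q.arrowδ a) (Q.arrowδ b) - (Q.conv (Q.arrowδ b) v - Q.conv v (Q.arrowδ b))
      ∈ Q.mPow (ℓ + 2) := by
  have hexpand : f (Q.conv (Q.arrowδ a) (Q.arrowδ b) + (Q.conv (Q.arrowδ a) u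
        + Q.conv (Q.arrowδ b) v)) - Q.conv (Q.arrowδ a) (Q.arrowδ b)
        - (Q.conv (Q.arrowδ b) v - Q.conv v (Q.arrowδ b)) =
      Q.conv (Q.arrowδ a) (f u - u) + Q.conv (Q.arrowδ b) (f v - v)
        + (Q.conv v u - Q.conv v (f u) - Q.conv u (f v)) := by
    simp only [hf.map_add, hf.map_conv, hfa, hfb, conv_sub_left, conv_sub_right]
    abel
  have hℓ1 : 1 ≤ ℓ := by omega
  have hfu := hf.sub_mem_mPow hnear hℓ1 hℓ1 hu
  have hfv := hf.sub_mem_mPow hnear hℓ1 hℓ1 hv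
  rw [hexpand]
  refine add_mem (add_mem ?_ ?_) (sub_mem (sub_mem ?_ ?_) ?_)
  · exact mPow_anti (by omega) (conv_mem_mPow (arrowδ_mem_mPow a) hfu)
  · exact mPow_anti (by omega) (conv_mem_mPow (arrowδ_mem_mPow b) hfv)
  · exact mPow_anti (by omega) (conv_mem_mPow hv hu)
  · exact mPow_anti (by omega) (conv_mem_mPow hv (hf.mem_mPow hnear hℓ1 hℓ1 hu))
  · exact mPow_anti (by omega) (conv_mem_mPow hu (hf.mem_mPow hnear hℓ1 hℓ1 hv))

lemma IsContEndo.remainder_mem (hu : ∀ k, u k ∈ Q.mPow ℓ) (hv : ∀ k, v k ∈ Q.mPow ℓ)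
    (hfa : ∀ k, f (Q.arrowδ (a k)) = Q.arrowδ (a k) - v k)
    (hfb : ∀ k, f (Q.arrowδ (b k)) = Q.arrowδ (b k) - u k) {W' : Q.CPA}
    (hW' : W' ∈ Q.mPow 3) :
    f ((∑ k, Q.conv (Q.arrowδ (a k)) (Q.arrowδ (b k)))
        + (∑ k, (Q.conv (Q.arrowδ (a k)) (u k) + Q.conv (Q.arrowδ (b k)) (v k))) + W')
      - ∑ k, Q.conv (Q.arrowδ (a k)) (Q.arrowδ (b k))
      - ∑ k, (Q.conv (Q.arrowδ (b k)) (v k) - Q.conv (v k) (Q.arrowδ (b k))) - W'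
      ∈ Q.mPow (ℓ + 2) := by
  convert add_mem (Submodule.sum_mem _ fun k _ =>
    hf.twoCycle_remainder_mem hℓ hnear (hu k) (hv k) (hfa k) (hfb k))
    (mPow_anti (by omega) (hf.sub_mem_mPow hnear (by omega) (by norm_num) hW')) using 1
  rw [← Finset.sum_add_distrib, hf.map_add, hf.map_sum]
  simp only [Finset.sum_sub_distrib]
  abel

end Reduction

section Remainder

variable {N : ℕ} {a b : Fin N → Q.A} {v : Fin N → Q.CPA} {ℓ : ℕ} {W' R : Q.CPA}

lemma mem_mPow_three_of_remainder (hℓ : 2 ≤ ℓ) (hv : ∀ k, v k ∈ Q.mPow ℓ)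
    (hW' : W' ∈ Q.mPow 3)
    (hZ : R - ∑ k, (Q.conv (Q.arrowδ (b k)) (v k) - Q.conv (v k) (Q.arrowδ (b k))) - W'
      ∈ Q.mPow (ℓ + 2)) : R ∈ Q.mPow 3 := by
  have hD : ∑ k, (Q.conv (Q.arrowδ (b k)) (v k) - Q.conv (v k) (Q.arrowδ (b k))) ∈ Q.mPow 3 :=
    Submodule.sum_mem _ fun k _ =>
      sub_mem (mPow_anti (by omega) (conv_mem_mPow (arrowδ_mem_mPow _) (hv k)))
        (mPow_anti (by omega) (conv_mem_mPow (hv k) (arrowδ_mem_mPow _)))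
  convert add_mem (add_mem (mPow_anti (by omega) hZ) hD) hW' using 1
  abel

lemma sum_rotations_coeff_eq_zero_of_remainder
    (hW'avoid : ∀ (l : Q.PathsPos) (k : Fin N), a k ∈ l.1 ∨ b k ∈ l.1 → W' (Sum.inr l) = 0)
    (hZ : R - ∑ k, (Q.conv (Q.arrowδ (b k)) (v k) - Q.conv (v k) (Q.arrowδ (b k))) - W'
      ∈ Q.mPow (ℓ + 2))
    {l : List Q.A} (hl : Q.IsCyclicPath l) (hmeet : ∃ x ∈ l, x ∈ Set.range a ∪ Set.range b)
    (hlen : l.length < ℓ + 2) : ∑ m ∈ l.rotations, Q.coeff m R = 0 := by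
  set D := ∑ k, (Q.conv (Q.arrowδ (b k)) (v k) - Q.conv (v k) (Q.arrowδ (b k)))
  have hsplit : ∀ m, Q.coeff m R = Q.coeff m (R - W' - D) + Q.coeff m D + Q.coeff m W' :=
    fun m => by rw [← map_add, ← map_add, sub_add_cancel, sub_add_cancel]
  have hZ0 : ∑ m ∈ l.rotations, Q.coeff m (R - W' - D) = 0 :=
    Finset.sum_eq_zero fun m hm => coeff_eq_zero_of_mem_mPow (sub_right_comm R D W' ▸ hZ)
      ((List.mem_rotations.mp hm).perm.length_eq ▸ hlen)
  have hD0 : ∑ m ∈ l.rotations, Q.coeff m D = 0 := by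
    simp only [D, map_sum]
    rw [Finset.sum_comm]
    exact Finset.sum_eq_zero fun k _ => sum_rotations_coeff_commutator _ _ hl
  have hW'0 : ∑ m ∈ l.rotations, Q.coeff m W' = 0 := by
    refine Finset.sum_eq_zero fun m hm => ?_
    obtain ⟨x, hx, hxab⟩ := hmeet
    have hxm : x ∈ m := (List.mem_rotations.mp hm).mem_iff.mpr hx
    rw [coeff_apply]
    split_ifs with hvalid
    · rcases hxab with ⟨k, rfl⟩ | ⟨k, rfl⟩
      · exact hW'avoid ⟨m, hvalid⟩ k (Or.inl hxm)
      · exact hW'avoid ⟨m, hvalid⟩ k (Or.inr hxm)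
    · rfl
  simp only [hsplit, Finset.sum_add_distrib, hZ0, hD0, hW'0, add_zero]

end Remainder

end Quiv

open Quiv in
theorem stmt11_general (V : Type) [Fintype V] (Q : Quiv V) [Fintype Q.A]
    (N : ℕ) (a b : Fin N → Q.A)
    (hdistinct : Function.Injective (Sum.elim a b : Fin N ⊕ Fin N → Q.A))
    (h2cycle : ∀ k, Q.src (a k) = Q.tgt (b k) ∧ Q.src (b k) = Q.tgt (a k))
    (ℓ : ℕ) (hℓ : 2 ≤ ℓ) (u v : Fin N → Q.CPA)
    (hu : ∀ k, ∀ p : Q.Pth, p.length < ℓ → u k p = 0)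
    (hv : ∀ k, ∀ p : Q.Pth, p.length < ℓ → v k p = 0)
    (W' : Q.CPA)
    (hW'm3 : ∀ p : Q.Pth, p.length < 3 → W' p = 0)
    (hW'avoid : ∀ (l : Q.PathsPos) (k : Fin N),
      a k ∈ l.1 ∨ b k ∈ l.1 → W' (Sum.inr l) = 0)
    (W : Q.CPA) (hWpot : Q.IsPotential W)
    (hW : W = (∑ k, Q.conv (Q.arrowδ (a k)) (Q.arrowδ (b k)))
        + (∑ k, (Q.conv (Q.arrowδ (a k)) (u k) + Q.conv (Q.arrowδ (b k)) (v k)))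
        + W')
    (f : Q.CPA → Q.CPA)
    (hfadd : ∀ x y : Q.CPA, f (x + y) = f x + f y)
    (hfsmul : ∀ (c : ℂ) (x : Q.CPA), f (c • x) = c • f x)
    (hfmul : ∀ x y : Q.CPA, f (Q.conv x y) = Q.conv (f x) (f y))
    (hfidem : ∀ i : V, f (Q.idem i) = Q.idem i)
    (hfcont : ∀ n : ℕ, ∃ m : ℕ, ∀ x y : Q.CPA,
      (∀ p : Q.Pth, p.length < m → x p = y p) →
      ∀ p : Q.Pth, p.length < n → f x p = f y p)
    (hfa : ∀ k, f (Q.arrowδ (a k)) = Q.arrowδ (a k) - v k)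
    (hfb : ∀ k, f (Q.arrowδ (b k)) = Q.arrowδ (b k) - u k)
    (hfc : ∀ c : Q.A, (∀ k, c ≠ a k ∧ c ≠ b k) → f (Q.arrowδ c) = Q.arrowδ c) :
    ∃ ℓ' : ℕ, ℓ < ℓ' ∧ ∃ (u' v' : Fin N → Q.CPA) (W'' : Q.CPA),
      (∀ k, ∀ p : Q.Pth, p.length < ℓ' → u' k p = 0) ∧
      (∀ k, ∀ p : Q.Pth, p.length < ℓ' → v' k p = 0) ∧
      (∀ p : Q.Pth, p.length < 3 → W'' p = 0) ∧
      (∀ (l : Q.PathsPos) (k : Fin N),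
        a k ∈ l.1 ∨ b k ∈ l.1 → W'' (Sum.inr l) = 0) ∧
      Q.CycEquiv (f W)
        ((∑ k, Q.conv (Q.arrowδ (a k)) (Q.arrowδ (b k)))
          + (∑ k, (Q.conv (Q.arrowδ (a k)) (u' k) + Q.conv (Q.arrowδ (b k)) (v' k)))
          + W'') := by
  set S₂ := ∑ k, Q.conv (Q.arrowδ (a k)) (Q.arrowδ (b k))
  set σ := List.normRot (List.PrefRot (Set.range a) (Set.range b))
  have hf : Q.IsContEndo f := ⟨hfadd, hfsmul, hfmul, hfidem, hfcont⟩
  have hnear := map_arrowδ_sub_mem_mPow hu hv hfa hfb hfc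
  have hZ := hW ▸ hf.remainder_mem hℓ hnear hu hv hfa hfb hW'm3
  have hfW : Q.SupportedOnCycles (f W) := hf.supportedOnCycles fun l => hWpot.1 (Sum.inr l)
  obtain ⟨u', v', W'', hu', hv', hW''3, hW''avoid, hy⟩ := exists_normalForm hdistinct
    (rotPush_mem_mPow (mem_mPow_three_of_remainder hℓ hv hW'm3 hZ)) fun l hl hl' =>
      rotPush_normRot_prefRot_eq_zero (hfW.sub (supportedOnCycles_sum_pair h2cycle))
        (fun _ => sum_rotations_coeff_eq_zero_of_remainder hW'avoid hZ) hl hl'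
  refine ⟨ℓ + 1, by omega, u', v', W'', hu', hv', hW''3, hW''avoid, ?_⟩
  have hpush : Q.rotPush σ (f W) = S₂ + Q.rotPush σ (f W - S₂) := by
    conv_lhs => rw [← add_sub_cancel S₂ (f W)]
    rw [rotPush_add, rotPush_sum_pair hdistinct]
  rw [add_assoc, ← hy, ← hpush]
  exact cycEquiv_rotPush (List.normRot_isRotated _) hfW

open Quiv in
/-- One step of the Derksen–Weyman–Zelevinsky reduction process.  Let `(Q,W)` be a QP
whose potential has the normal form
`W = ∑_{k=1}^N a_k b_k + ∑_{k=1}^N (a_k u_k + b_k v_k) + W'`,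
where `a₁,b₁,…,a_N,b_N` are `2N` distinct arrows such that each `a_k b_k` is a
2-cycle, `u_k, v_k ∈ 𝔪^ℓ` for some `ℓ ≥ 2`, and `W' ∈ 𝔪³` involves none of the arrows
`a_k, b_k`.  Let `f` be the (continuous, unital, `e_i`-fixing) algebra endomorphism of
`ℂ⟨⟨Q⟩⟩` with `f(a_k) = a_k − v_k`, `f(b_k) = b_k − u_k` and `f(c) = c` for all other
arrows `c`.  Then `f(W)` is cyclically equivalent to a potential of the same form, but
with the correction terms `u'_k, v'_k` lying in `𝔪^{ℓ'}` for some `ℓ' > ℓ`. -/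
theorem stmt11 (V : Type) [Fintype V] [DecidableEq V] (Q : Quiv V) [Fintype Q.A]
    (N : ℕ) (a b : Fin N → Q.A)
    (hdistinct : Function.Injective (Sum.elim a b : Fin N ⊕ Fin N → Q.A))
    (h2cycle : ∀ k, Q.src (a k) = Q.tgt (b k) ∧ Q.src (b k) = Q.tgt (a k))
    (ℓ : ℕ) (hℓ : 2 ≤ ℓ) (u v : Fin N → Q.CPA)
    (hu : ∀ k, ∀ p : Q.Pth, p.length < ℓ → u k p = 0)
    (hv : ∀ k, ∀ p : Q.Pth, p.length < ℓ → v k p = 0)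
    (W' : Q.CPA)
    (hW'm3 : ∀ p : Q.Pth, p.length < 3 → W' p = 0)
    (hW'avoid : ∀ (l : Q.PathsPos) (k : Fin N),
      a k ∈ l.1 ∨ b k ∈ l.1 → W' (Sum.inr l) = 0)
    (W : Q.CPA) (hWpot : Q.IsPotential W)
    (hW : W = (∑ k, Q.conv (Q.arrowδ (a k)) (Q.arrowδ (b k)))
        + (∑ k, (Q.conv (Q.arrowδ (a k)) (u k) + Q.conv (Q.arrowδ (b k)) (v k)))
        + W')
    (f : Q.CPA → Q.CPA)
    (hfadd : ∀ x y : Q.CPA, f (x + y) = f x + f y)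
    (hfsmul : ∀ (c : ℂ) (x : Q.CPA), f (c • x) = c • f x)
    (hfmul : ∀ x y : Q.CPA, f (Q.conv x y) = Q.conv (f x) (f y))
    (hfone : f Q.one = Q.one)
    (hfidem : ∀ i : V, f (Q.idem i) = Q.idem i)
    (hfcont : ∀ n : ℕ, ∃ m : ℕ, ∀ x y : Q.CPA,
      (∀ p : Q.Pth, p.length < m → x p = y p) →
      ∀ p : Q.Pth, p.length < n → f x p = f y p)
    (hfa : ∀ k, f (Q.arrowδ (a k)) = Q.arrowδ (a k) - v k)
    (hfb : ∀ k, f (Q.arrowδ (b k)) = Q.arrowδ (b k) - u k)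
    (hfc : ∀ c : Q.A, (∀ k, c ≠ a k ∧ c ≠ b k) → f (Q.arrowδ c) = Q.arrowδ c) :
    ∃ ℓ' : ℕ, ℓ < ℓ' ∧ ∃ (u' v' : Fin N → Q.CPA) (W'' : Q.CPA),
      (∀ k, ∀ p : Q.Pth, p.length < ℓ' → u' k p = 0) ∧
      (∀ k, ∀ p : Q.Pth, p.length < ℓ' → v' k p = 0) ∧
      (∀ p : Q.Pth, p.length < 3 → W'' p = 0) ∧
      (∀ (l : Q.PathsPos) (k : Fin N),
        a k ∈ l.1 ∨ b k ∈ l.1 → W'' (Sum.inr l) = 0) ∧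
      Q.CycEquiv (f W)
        ((∑ k, Q.conv (Q.arrowδ (a k)) (Q.arrowδ (b k)))
          + (∑ k, (Q.conv (Q.arrowδ (a k)) (u' k) + Q.conv (Q.arrowδ (b k)) (v' k)))
          + W'') :=
  stmt11_general V Q N a b hdistinct h2cycle ℓ hℓ u v hu hv W' hW'm3 hW'avoid W hWpot hW f hfadd
    hfsmul hfmul hfidem hfcont hfa hfb hfc
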